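/- Let t be an indeterminate and set a_n = (t^5 q;q)_{5n}/((t q;q)_n)^5 ∈ ℚ(q,t) and J(Q) = Σ_{n≥0} a_n Q^n ∈ ℚ(q,t)[[Q]]. Let E be the ℚ(q,t)-algebra map of ℚ(q,t)[[Q]] with E(Q) = qQ. Then (1 − tE)^5 (J − 1) = Q·∏_{j=1}^{5}(1 − q^j t^5 E^5) J, and consequently [(1−tE)^5 − Q ∏_{j=1}^{5}(1 − q^j t^5 E^5)] J = (1−t)^5. -/

import Mathlib

open Finset PowerSeries

/-- The field `ℚ(q,t)`. -/
noncomputable abbrev QQqt : Type := FractionRing (MvPolynomial (Fin 2) ℚ)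

noncomputable def qVar : QQqt := algebraMap (MvPolynomial (Fin 2) ℚ) QQqt (MvPolynomial.X 0)

noncomputable def tVar : QQqt := algebraMap (MvPolynomial (Fin 2) ℚ) QQqt (MvPolynomial.X 1)

/-- The `q`-Pochhammer symbol `(z;q)_d = ∏_{j=0}^{d−1} (1 − q^j z)`. -/
noncomputable def qPoch (z : QQqt) (d : ℕ) : QQqt :=
  ∏ j ∈ Finset.range d, (1 - qVar ^ j * z)

/-- The coefficients `a_n = (t⁵q;q)_{5n} / ((tq;q)_n)⁵`. -/
noncomputable def aCoeff (n : ℕ) : QQqt :=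
  qPoch (tVar ^ 5 * qVar) (5 * n) / (qPoch (tVar * qVar) n) ^ 5

/-- The series `J = ∑ a_n Qⁿ ∈ ℚ(q,t)[[Q]]`. -/
noncomputable def Jser : PowerSeries QQqt := PowerSeries.mk aCoeff

/-- The operator `1 − tE`, where `E(Q) = qQ`. -/
noncomputable def opA (f : PowerSeries QQqt) : PowerSeries QQqt :=
  f - PowerSeries.C tVar * PowerSeries.rescale qVar f

/-- The operator `1 − q^j t⁵ E⁵`, where `E(Q) = qQ`. -/
noncomputable def opB (j : ℕ) (f : PowerSeries QQqt) : PowerSeries QQqt :=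
  f - PowerSeries.C (qVar ^ j * tVar ^ 5) * PowerSeries.rescale (qVar ^ 5) f

/-!
Since `E(Qⁿ) = qⁿ Qⁿ`, the operators `1 − tE` and `1 − q^j t⁵ E⁵` act diagonally on monomials,
so both identities can be checked coefficientwise. The constant term of the first one vanishes
because `a₀ = 1`; at `Q^{n+1}` it becomes the recursion
`(1 − t q^{n+1})⁵ a_{n+1} = ∏_{j=1}^{5} (1 − q^{5n+j} t⁵) a_n`, which is the ratio of consecutive
Pochhammer symbols. The second identity follows from the first since `(1 − tE)⁵ 1 = (1 − t)⁵`.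
-/

section DiagonalOperators

variable {R : Type*} [CommRing R]

theorem PowerSeries.coeff_sub_C_mul_rescale (c a : R) (f : R⟦X⟧) (n : ℕ) :
    coeff n (f - C c * rescale a f) = (1 - c * a ^ n) * coeff n f := by
  rw [map_sub, coeff_C_mul, coeff_rescale]
  ring

theorem PowerSeries.coeff_iterate_of_coeff_eq_mul {T : R⟦X⟧ → R⟦X⟧} {μ : ℕ → R}
    (hT : ∀ f n, coeff n (T f) = μ n * coeff n f) (k n : ℕ) (f : R⟦X⟧) :
    coeff n (T^[k] f) = μ n ^ k * coeff n f := by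
  induction k with
  | zero => simp
  | succ k ih => rw [Function.iterate_succ_apply', hT, ih, pow_succ', mul_assoc]

end DiagonalOperators

theorem coeff_opA (f : QQqt⟦X⟧) (n : ℕ) : coeff n (opA f) = (1 - tVar * qVar ^ n) * coeff n f :=
  coeff_sub_C_mul_rescale _ _ f n

theorem coeff_opA_iterate (k n : ℕ) (f : QQqt⟦X⟧) :
    coeff n (opA^[k] f) = (1 - tVar * qVar ^ n) ^ k * coeff n f :=
  coeff_iterate_of_coeff_eq_mul coeff_opA k n f

theorem coeff_opB (j n : ℕ) (f : QQqt⟦X⟧) :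
    coeff n (opB j f) = (1 - qVar ^ j * tVar ^ 5 * (qVar ^ 5) ^ n) * coeff n f :=
  coeff_sub_C_mul_rescale _ _ f n

theorem qVar_pow_mul_tVar_pow_ne_one {a b : ℕ} (hb : b ≠ 0) : qVar ^ a * tVar ^ b ≠ 1 := by
  intro h
  have hX : (MvPolynomial.X 0 ^ a * MvPolynomial.X 1 ^ b : MvPolynomial (Fin 2) ℚ) = 1 :=
    IsFractionRing.injective _ QQqt (by simpa [qVar, tVar] using h)
  simpa [hb] using congrArg (MvPolynomial.eval 0) hX

theorem one_sub_qVar_pow_mul_tVar_mul_qVar_ne_zero (j : ℕ) :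
    1 - qVar ^ j * (tVar * qVar) ≠ 0 := by
  rw [sub_ne_zero, ne_comm, show qVar ^ j * (tVar * qVar) = qVar ^ (j + 1) * tVar ^ 1 by ring]
  exact qVar_pow_mul_tVar_pow_ne_one one_ne_zero

theorem qPoch_add (z : QQqt) (d m : ℕ) :
    qPoch z (d + m) = qPoch z d * ∏ i ∈ range m, (1 - qVar ^ (d + i) * z) :=
  prod_range_add _ d m

theorem qPoch_succ (z : QQqt) (d : ℕ) : qPoch z (d + 1) = qPoch z d * (1 - qVar ^ d * z) :=
  prod_range_succ _ d

theorem aCoeff_zero : aCoeff 0 = 1 := by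
  simp [aCoeff, qPoch]

theorem aCoeff_succ (n : ℕ) :
    (1 - tVar * qVar ^ (n + 1)) ^ 5 * aCoeff (n + 1) =
      (∏ j ∈ range 5, (1 - qVar ^ (5 * n + j) * (tVar ^ 5 * qVar))) * aCoeff n := by
  have hfac := one_sub_qVar_pow_mul_tVar_mul_qVar_ne_zero n
  rw [aCoeff, aCoeff, show 5 * (n + 1) = 5 * n + 5 by ring, qPoch_add, qPoch_succ,
    show tVar * qVar ^ (n + 1) = qVar ^ n * (tVar * qVar) by ring]
  rw [mul_pow, ← div_div, mul_div_assoc', mul_div_cancel_left₀ _ (pow_ne_zero 5 hfac)]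
  ring

/-- Lemma 3.3 of the paper (with `e^x` replaced by `t`):
`(1 − tE)⁵ (J − 1) = Q ∏_{j=1}^{5}(1 − q^j t⁵ E⁵) J`, and consequently
`[(1−tE)⁵ − Q ∏_{j=1}^{5}(1 − q^j t⁵ E⁵)] J = (1−t)⁵`. -/
theorem stmt_15 :
    opA^[5] (Jser - 1) =
      PowerSeries.X * opB 1 (opB 2 (opB 3 (opB 4 (opB 5 Jser)))) ∧
    opA^[5] Jser - PowerSeries.X * opB 1 (opB 2 (opB 3 (opB 4 (opB 5 Jser)))) =
      PowerSeries.C ((1 - tVar) ^ 5) := by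
  have hJ : opA^[5] (Jser - 1) = X * opB 1 (opB 2 (opB 3 (opB 4 (opB 5 Jser)))) := by
    ext (_ | n)
    · rw [coeff_opA_iterate, coeff_zero_X_mul, map_sub, Jser, coeff_mk, aCoeff_zero, coeff_one,
        if_pos rfl, sub_self, mul_zero]
    · simp only [coeff_opA_iterate, coeff_succ_X_mul, coeff_opB, map_sub, coeff_one, Jser,
        coeff_mk, Nat.succ_ne_zero, if_false, sub_zero, aCoeff_succ, prod_range_succ,
        prod_range_zero]
      ring
  refine ⟨hJ, ?_⟩
  ext n
  rw [← hJ, map_sub, coeff_opA_iterate, coeff_opA_iterate, map_sub, coeff_one, coeff_C]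
  split_ifs with hn
  · rw [hn, pow_zero, mul_one]
    ring
  · ring
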